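/- Let R be a commutative ring and M an R-module. The following are equivalent: (1) M is a finitely presented R-module; (2) for every prime ideal 𝔭 of R, M is u-(R∖𝔭)-finitely presented; (3) for every maximal ideal 𝔪 of R, M is u-(R∖𝔪)-finitely presented. -/
import Mathlib


universe u v

/-- `M` is `u`-`S`-finitely presented: there are a finitely presented module `F`,
a linear map `f : F → M` and an `s ∈ S` annihilating both kernel and cokernel of `f`. -/
def IsUSFinitelyPresented (R : Type u) [CommRing R] (S : Submonoid R)
    (M : Type v) [AddCommGroup M] [Module R M] : Prop :=
  ∃ (F : Type v) (_ : AddCommGroup F) (_ : Module R F),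
    Module.FinitePresentation R F ∧
      ∃ (f : F →ₗ[R] M) (s : R), s ∈ S ∧
        (∀ x ∈ LinearMap.ker f, s • x = (0 : F)) ∧
        (∀ y : M, s • y ∈ LinearMap.range f)

/-- Local-global principle: if for every maximal ideal `m` there are `s ∉ m` and a
finitely generated submodule `N ≤ K` with `s • K ⊆ N`, then `K` is finitely generated. -/
lemma Submodule.fg_of_local_smul {R : Type u} {M : Type v} [CommRing R] [AddCommGroup M]
    [Module R M] (K : Submodule R M)
    (H : ∀ (m : Ideal R), m.IsMaximal → ∃ s : R, s ∉ m ∧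
      ∃ N : Submodule R M, N.FG ∧ N ≤ K ∧ ∀ x ∈ K, s • x ∈ N) : K.FG := by
  let I : Ideal R :=
    { carrier := {r : R | ∃ N : Submodule R M, N.FG ∧ N ≤ K ∧ ∀ x ∈ K, r • x ∈ N}
      add_mem' := by
        rintro a b ⟨Na, hNa, hNaK, ha⟩ ⟨Nb, hNb, hNbK, hb⟩
        refine ⟨Na ⊔ Nb, hNa.sup hNb, sup_le hNaK hNbK, fun x hx => ?_⟩
        rw [add_smul]
        exact add_mem (Submodule.mem_sup_left (ha x hx)) (Submodule.mem_sup_right (hb x hx))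
      zero_mem' := ⟨⊥, Submodule.fg_bot, bot_le, fun x _ => by simp⟩
      smul_mem' := by
        rintro c a ⟨N, hN, hNK, ha⟩
        exact ⟨N, hN, hNK, fun x hx => by
          rw [smul_eq_mul, mul_smul]; exact N.smul_mem c (ha x hx)⟩ }
  have hI : I = ⊤ := by
    by_contra h
    obtain ⟨m, hm, hIm⟩ := Ideal.exists_le_maximal I h
    obtain ⟨s, hs, N, hN, hNK, hsK⟩ := H m hm
    exact hs (hIm ⟨N, hN, hNK, hsK⟩)
  have h1 : (1 : R) ∈ I := hI ▸ Submodule.mem_top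
  obtain ⟨N, hN, hNK, hsK⟩ := h1
  have : K = N := le_antisymm (fun x hx => by simpa using hsK x hx) hNK
  rw [this]; exact hN

/-- `M` is finitely presented iff `M` is `u`-`(R∖𝔭)`-finitely presented for every prime
`𝔭`, iff `M` is `u`-`(R∖𝔪)`-finitely presented for every maximal ideal `𝔪`. -/
theorem finitePresentation_iff_uSFinitelyPresented_at_primes
    (R : Type u) [CommRing R] (M : Type v) [AddCommGroup M] [Module R M] :
    List.TFAE
      [ Module.FinitePresentation R M,
        ∀ (p : Ideal R) (hp : p.IsPrime),
          IsUSFinitelyPresented R (@Ideal.primeCompl R _ p hp) M,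
        ∀ (m : Ideal R) (hm : m.IsMaximal),
          IsUSFinitelyPresented R (@Ideal.primeCompl R _ m hm.isPrime) M ] := by
  tfae_have 1 → 2 := by
    intro h p hp
    exact ⟨M, inferInstance, inferInstance, h, LinearMap.id, 1, p.primeCompl.one_mem,
      fun x hx => by simpa using LinearMap.mem_ker.mp hx,
      fun y => ⟨1 • y, by simp⟩⟩
  tfae_have 2 → 3 := fun h m hm => h m hm.isPrime
  tfae_have 3 → 1 := by
    intro H
    -- M is finite
    have hfin : Module.Finite R M := by
      rw [Module.finite_def]
      apply Submodule.fg_of_local_smul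
      intro m hm
      obtain ⟨F, _, _, hFP, f, s, hs, hkf, hrf⟩ := H m hm
      have : Module.Finite R F := inferInstance
      refine ⟨s, hs, LinearMap.range f, ?_, le_top, fun y _ => hrf y⟩
      rw [LinearMap.range_eq_map]
      exact (Module.finite_def.mp this).map f
    obtain ⟨n, π, hπ⟩ := Module.Finite.exists_fin' R M
    have hker : (LinearMap.ker π).FG := by
      apply Submodule.fg_of_local_smul
      intro m hm
      obtain ⟨F, _, _, hFP, f, s, hs, hkf, hrf⟩ := H m hm
      obtain ⟨k, q, hq⟩ := Module.Finite.exists_fin' R F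
      have hK0 : (LinearMap.ker q).FG := Module.FinitePresentation.fg_ker q hq
      -- lift f ∘ q through π
      obtain ⟨h, hh⟩ := Module.projective_lifting_property π (f ∘ₗ q) hπ
      -- g with f ∘ g = s • π
      have hmem : ∀ x, (s • π) x ∈ LinearMap.range f := fun x => hrf (π x)
      obtain ⟨g, hg⟩ := Module.projective_lifting_property f.rangeRestrict
        (LinearMap.codRestrict _ (s • π) hmem) f.surjective_rangeRestrict
      have hfg' : ∀ x, f (g x) = s • π x := fun x =>
        congrArg Subtype.val (LinearMap.congr_fun hg x)
      -- lift g through q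
      obtain ⟨g', hg'⟩ := Module.projective_lifting_property q g hq
      set u : (Fin n → R) →ₗ[R] (Fin n → R) := h ∘ₗ g' with hu
      have hπu : ∀ x, π (u x) = s • π x := by
        intro x
        have h1 : π (h (g' x)) = f (q (g' x)) := LinearMap.congr_fun hh (g' x)
        have h2 : q (g' x) = g x := LinearMap.congr_fun hg' x
        rw [hu]
        simpa [h2, hfg' x] using h1
      set v : (Fin n → R) →ₗ[R] (Fin n → R) := u - s • LinearMap.id with hv
      have hvx : ∀ x, v x = u x - s • x := fun x => rfl
      have hvker : ∀ x, v x ∈ LinearMap.ker π := by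
        intro x
        rw [LinearMap.mem_ker, hvx, map_sub, map_smul, hπu, sub_self]
      set N : Submodule R (Fin n → R) :=
        Submodule.map h (LinearMap.ker q) ⊔ LinearMap.range v with hN
      refine ⟨s * s, m.primeCompl.mul_mem hs hs, N, ?_, ?_, ?_⟩
      · refine Submodule.FG.sup (hK0.map h) ?_
        rw [LinearMap.range_eq_map]
        exact (Module.finite_def.mp inferInstance).map v
      · refine sup_le ?_ ?_
        · rintro _ ⟨y, hy, rfl⟩
          rw [LinearMap.mem_ker, show π (h y) = f (q y) from LinearMap.congr_fun hh y,
            LinearMap.mem_ker.mp hy, map_zero]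
        · rintro _ ⟨y, rfl⟩
          exact hvker y
      · intro x hx
        have hπx : π x = 0 := LinearMap.mem_ker.mp hx
        have hgx : g x ∈ LinearMap.ker f := by
          rw [LinearMap.mem_ker, hfg', hπx, smul_zero]
        have hsg : g (s • x) = 0 := by rw [map_smul]; exact hkf _ hgx
        have hgq : g' (s • x) ∈ LinearMap.ker q := by
          rw [LinearMap.mem_ker, show q (g' (s • x)) = g (s • x) from LinearMap.congr_fun hg' (s • x), hsg]
        have key : (s * s) • x = u (s • x) - v (s • x) := by
          rw [hvx]; simp [mul_smul]
        rw [key]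
        refine sub_mem (Submodule.mem_sup_left ⟨g' (s • x), hgq, rfl⟩)
          (Submodule.mem_sup_right ⟨s • x, rfl⟩)
    exact Module.finitePresentation_of_surjective π hπ hker
  tfae_finish
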